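/- Sample P ∈ {0,1}ⁿ uniformly (n even) and a graph G where each pair is an edge independently with probability 1/2 + ρ if endpoints agree under P and 1/2 − ρ otherwise, with ρ = 100ε and ε ∈ (ω(√(log n/n)), 0.001). Then with probability ≥ 1 − n^{−Ω(1)}, there exists a bisection P' ∈ {0,1}ⁿ with |P'| = n/2 such that cut_G(P') ≤ cut_G(P) + 0.001εn²; in particular the minimum bisection size of G is at most cut_G(P) + 0.001εn². -/

import Mathlib

/-!
Chernoff's bound for a sum of `n` random signs (through `cosh l ≤ exp (l² / 2)`) shows that
with probability at least `1 - 2 / n²` the planted side has size within `√(n log n)` of `n / 2`.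
Moving that many vertices to the other side turns `P` into a bisection and changes the cut by at
most `n` per moved vertex, so by at most `n √(n log n) ≤ 0.001 ε n²` as soon as
`ε √(n / log n) ≥ 1000`. This holds for every graph, so the law of `G` given `P` enters only
through its total mass `2⁻ⁿ`.
-/

open Finset

-- Unordered pairs of distinct vertices, encoded as ordered pairs `(u,v)` with `u < v`.
abbrev PairIdx (n : ℕ) := {p : Fin n × Fin n // p.1 < p.2}

-- Correlation clustering cost of the clustering given by the labelling `c`
-- on the graph `g`: the number of non-edges inside clusters plus edges across clusters.
open Classical in
noncomputable def ccCost {n : ℕ} {L : Type*} (g : PairIdx n → Bool) (c : Fin n → L) : ℝ :=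
  ∑ p : PairIdx n, if ((g p = true) ↔ (c p.val.1 = c p.val.2)) then 0 else 1

-- Density of the planted-partition distribution: `P ∈ {0,1}ⁿ` uniform, then each
-- pair is an edge independently with probability `1/2 + ρ` if the endpoints agree
-- under `P` and `1/2 − ρ` otherwise.
open Classical in
noncomputable def plantedDensity (n : ℕ) (ρ : ℝ) (P : Fin n → Bool)
    (g : PairIdx n → Bool) : ℝ :=
  ((2 : ℝ) ^ n)⁻¹ * ∏ p : PairIdx n,
    (if ((g p = true) ↔ (P p.val.1 = P p.val.2)) then 1/2 + ρ else 1/2 - ρ)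

-- Cut size of the partition `P` in the graph `g`.
open Classical in
noncomputable def cutSize {n : ℕ} (g : PairIdx n → Bool) (P : Fin n → Bool) : ℝ :=
  ∑ p : PairIdx n, if (g p = true ∧ P p.val.1 ≠ P p.val.2) then 1 else 0

open Real

section RandomSigns
variable {ι : Type*} [Fintype ι]

def spinSum (x : ι → Bool) : ℝ := ∑ i, if x i then 1 else -1

lemma spinSum_eq (x : ι → Bool) : spinSum x = 2 * #{i | x i} - Fintype.card ι := by
  have h : ∀ i, (if x i then (1 : ℝ) else -1) = 2 * (if x i then 1 else 0) - 1 := by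
    intro i; split <;> ring
  simp only [spinSum, h, sum_sub_distrib, ← mul_sum, sum_boole, sum_const, card_univ,
    nsmul_eq_mul, mul_one]

variable [DecidableEq ι]

lemma sum_exp_mul_spinSum (l : ℝ) :
    ∑ x : ι → Bool, exp (l * spinSum x) = (2 * cosh l) ^ Fintype.card ι := by
  have hfactor : ∑ b : Bool, exp (l * if b then 1 else -1) = 2 * cosh l := by
    simp [cosh_eq]; ring
  simp only [spinSum, mul_sum, exp_sum]
  refine (Fintype.prod_sum fun (_ : ι) (b : Bool) => exp (l * if b then 1 else -1)).symm.trans ?_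
  rw [hfactor, prod_const, card_univ]

lemma card_le_exp_mul_cosh_pow (l c : ℝ) :
    (#{x : ι → Bool | c ≤ l * spinSum x} : ℝ) ≤ exp (-c) * (2 * cosh l) ^ Fintype.card ι := by
  rw [← sum_exp_mul_spinSum, mul_sum, card_eq_sum_ones, Nat.cast_sum]
  calc ∑ x ∈ {x : ι → Bool | c ≤ l * spinSum x}, ((1 : ℕ) : ℝ)
      ≤ ∑ x ∈ {x : ι → Bool | c ≤ l * spinSum x}, exp (-c) * exp (l * spinSum x) := by
        refine sum_le_sum fun x hx => ?_
        rw [← exp_add, Nat.cast_one]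
        exact one_le_exp (by linarith [(mem_filter.mp hx).2])
    _ ≤ _ := sum_le_sum_of_subset_of_nonneg (subset_univ _) fun _ _ _ => by positivity

lemma card_le_abs_spinSum {a : ℝ} (ha : 0 ≤ a) :
    (#{x : ι → Bool | a ≤ |spinSum x|} : ℝ) ≤
      2 * 2 ^ Fintype.card ι * exp (-a ^ 2 / (2 * Fintype.card ι)) := by
  set N : ℝ := (Fintype.card ι : ℝ)
  set l := a / N
  have hl : 0 ≤ l := by positivity
  have hsplit : ({x | a ≤ |spinSum x|} : Finset (ι → Bool)) ⊆
      ({x | a * l ≤ l * spinSum x} : Finset (ι → Bool)) ∪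
        ({x | a * l ≤ -l * spinSum x} : Finset (ι → Bool)) := by
    intro x hx
    simp only [mem_filter, mem_univ, true_and, mem_union] at hx ⊢
    rcases le_abs'.mp hx with h | h
    · right; linarith [mul_le_mul_of_nonneg_left h hl]
    · left; linarith [mul_le_mul_of_nonneg_left h hl]
  have htail : ∀ l' : ℝ, |l'| = l →
      (#{x : ι → Bool | a * l ≤ l' * spinSum x} : ℝ) ≤
        2 ^ Fintype.card ι * exp (-a ^ 2 / (2 * N)) := by
    intro l' hl'
    have hcosh : (2 * cosh l') ^ Fintype.card ι ≤ 2 ^ Fintype.card ι * exp (N * (l ^ 2 / 2)) := by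
      calc (2 * cosh l') ^ Fintype.card ι ≤ (2 * exp (l ^ 2 / 2)) ^ Fintype.card ι := by
            gcongr
            rw [← cosh_abs, hl']
            exact cosh_le_exp_half_sq l
        _ = _ := by rw [mul_pow, ← exp_nat_mul]
    have hexp : -(a * l) + N * (l ^ 2 / 2) = -a ^ 2 / (2 * N) := by
      rcases eq_or_ne N 0 with h | h
      · simp [l, h]
      · simp only [l]; field_simp; ring
    calc _ ≤ exp (-(a * l)) * (2 * cosh l') ^ Fintype.card ι := card_le_exp_mul_cosh_pow _ _
      _ ≤ exp (-(a * l)) * (2 ^ Fintype.card ι * exp (N * (l ^ 2 / 2))) := by gcongr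
      _ = _ := by rw [← hexp, exp_add]; ring
  calc _ ≤ ((#{x : ι → Bool | a * l ≤ l * spinSum x} +
        #{x : ι → Bool | a * l ≤ -l * spinSum x} : ℕ) : ℝ) := by
        exact_mod_cast (card_le_card hsplit).trans (card_union_le _ _)
    _ ≤ _ := by
        push_cast
        linarith [htail l (abs_of_nonneg hl), htail (-l) (by rw [abs_neg, abs_of_nonneg hl])]

lemma one_sub_two_div_sq_le_card_balanced (hN : 1 < Fintype.card ι) :
    1 - 2 / (Fintype.card ι : ℝ) ^ 2 ≤
      (#{x : ι → Bool | |(#{i | x i} : ℝ) - Fintype.card ι / 2| ≤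
        √(Fintype.card ι * log (Fintype.card ι))} : ℝ) / 2 ^ Fintype.card ι := by
  set N : ℝ := (Fintype.card ι : ℝ)
  have hN1 : 1 < N := Nat.one_lt_cast.mpr hN
  have hlog : 0 < log N := log_pos hN1
  set t := √(N * log N)
  have hpart := card_filter_add_card_filter_not (s := (univ : Finset (ι → Bool)))
    (fun x => |(#{i | x i} : ℝ) - N / 2| ≤ t)
  have hbad : ({x | ¬ |(#{i | x i} : ℝ) - N / 2| ≤ t} : Finset (ι → Bool)) ⊆
      ({x | 2 * t ≤ |spinSum x|} : Finset (ι → Bool)) := by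
    intro x hx
    simp only [mem_filter, mem_univ, true_and, not_le] at hx ⊢
    rw [spinSum_eq, show 2 * (#{i | x i} : ℝ) - N = 2 * ((#{i | x i} : ℝ) - N / 2) by ring,
      abs_mul, abs_two]
    linarith
  have htail : (2 * t) ^ 2 / (2 * N) = 2 * log N := by
    rw [mul_pow, sq_sqrt (by positivity)]; field_simp
  have hbound := (Nat.cast_le.mpr (card_le_card hbad)).trans (card_le_abs_spinSum (by positivity))
  have hexp : exp (-(2 * log N)) = 1 / N ^ 2 := by
    rw [exp_neg, two_mul, exp_add, exp_log (by positivity)]; ring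
  rw [neg_div, htail, hexp] at hbound
  rw [card_univ, Fintype.card_fun, Fintype.card_bool] at hpart
  have hcard := congrArg (Nat.cast (R := ℝ)) hpart
  push_cast at hcard
  rw [le_div_iff₀ (by positivity), show (1 - 2 / N ^ 2) * 2 ^ Fintype.card ι =
    2 ^ Fintype.card ι - 2 * 2 ^ Fintype.card ι * (1 / N ^ 2) by ring]
  linarith

end RandomSigns

lemma sum_plantedDensity (n : ℕ) (ρ : ℝ) (P : Fin n → Bool) :
    ∑ g : PairIdx n → Bool, plantedDensity n ρ P g = ((2 : ℝ) ^ n)⁻¹ := by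
  have hpair : ∀ p : PairIdx n,
      ∑ b : Bool, (if (b = true ↔ P p.val.1 = P p.val.2) then 1/2 + ρ else 1/2 - ρ) = 1 := by
    intro p
    by_cases h : P p.val.1 = P p.val.2 <;> simp [h] <;> ring
  unfold plantedDensity
  rw [← mul_sum, ← Fintype.prod_sum (fun (p : PairIdx n) (b : Bool) =>
    if (b = true ↔ P p.val.1 = P p.val.2) then 1/2 + ρ else 1/2 - ρ)]
  simp only [hpair, prod_const_one, mul_one]

lemma plantedDensity_nonneg {n : ℕ} {ρ : ℝ} (hρ : |ρ| ≤ 1 / 2) (P : Fin n → Bool)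
    (g : PairIdx n → Bool) : 0 ≤ plantedDensity n ρ P g := by
  have := abs_le.mp hρ
  unfold plantedDensity
  refine mul_nonneg (by positivity) (prod_nonneg fun p _ => ?_)
  split <;> linarith

lemma card_div_le_sum_plantedDensity {n : ℕ} {ρ : ℝ} (hρ : |ρ| ≤ 1 / 2)
    (E : (Fin n → Bool) → (PairIdx n → Bool) → Prop) [∀ P g, Decidable (E P g)]
    (S : Finset (Fin n → Bool)) (hS : ∀ P ∈ S, ∀ g, E P g) :
    (#S : ℝ) / 2 ^ n ≤
      ∑ P : Fin n → Bool, ∑ g : PairIdx n → Bool,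
        plantedDensity n ρ P g * if E P g then 1 else 0 := by
  have hterm_nonneg : ∀ P g, 0 ≤ plantedDensity n ρ P g * if E P g then 1 else 0 := fun P g =>
    mul_nonneg (plantedDensity_nonneg hρ P g) (by split <;> norm_num)
  calc (#S : ℝ) / 2 ^ n = ∑ P ∈ S, ∑ g : PairIdx n → Bool, plantedDensity n ρ P g := by
        rw [sum_congr rfl fun P _ => sum_plantedDensity n ρ P, sum_const, nsmul_eq_mul,
          div_eq_mul_inv]
    _ = ∑ P ∈ S, ∑ g : PairIdx n → Bool, plantedDensity n ρ P g * if E P g then 1 else 0 :=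
        sum_congr rfl fun P hP => sum_congr rfl fun g _ => by rw [if_pos (hS P hP g), mul_one]
    _ ≤ _ := sum_le_sum_of_subset_of_nonneg (subset_univ S) fun P _ _ =>
        sum_nonneg fun g _ => hterm_nonneg P g

lemma card_pairIdx_touching_le {n : ℕ} (D : Finset (Fin n)) :
    #{p : PairIdx n | p.val.1 ∈ D ∨ p.val.2 ∈ D} ≤ #D * n := by
  -- record a touching pair as (endpoint in `D`, other endpoint); `p.1 < p.2` makes this injective
  let f : PairIdx n → Fin n × Fin n := fun p => if p.val.1 ∈ D then p.val else p.val.swap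
  have hf : Function.Injective f := by
    intro p q h
    apply Subtype.ext
    simp only [f] at h
    split_ifs at h
    · exact h
    · have := p.2; rw [h] at this; exact absurd this (not_lt.mpr q.2.le)
    · have := q.2; rw [← h] at this; exact absurd this (not_lt.mpr p.2.le)
    · exact Prod.swap_injective h
  have hmaps : ∀ p ∈ ({p : PairIdx n | p.val.1 ∈ D ∨ p.val.2 ∈ D} : Finset (PairIdx n)),
      f p ∈ D ×ˢ (univ : Finset (Fin n)) := by
    intro p hp
    simp only [mem_filter, mem_univ, true_and] at hp
    by_cases h : p.val.1 ∈ D <;> simp [f, h, hp.resolve_left]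
  simpa using card_le_card_of_injOn f hmaps hf.injOn

lemma cutSize_le_add_hammingDist_mul {n : ℕ} (g : PairIdx n → Bool) (P P' : Fin n → Bool) :
    cutSize g P' ≤ cutSize g P + hammingDist P' P * n := by
  classical
  set D : Finset (Fin n) := {i | P' i ≠ P i}
  have hpair : ∀ p : PairIdx n,
      (if g p = true ∧ P' p.val.1 ≠ P' p.val.2 then 1 else 0 : ℝ) ≤
        (if g p = true ∧ P p.val.1 ≠ P p.val.2 then 1 else 0) +
          if p.val.1 ∈ D ∨ p.val.2 ∈ D then 1 else 0 := by
    intro p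
    by_cases hp : p.val.1 ∈ D ∨ p.val.2 ∈ D
    · rw [if_pos hp]; split_ifs <;> norm_num
    · rw [if_neg hp, add_zero]
      simp only [D, mem_filter, mem_univ, true_and, not_or, not_not] at hp
      rw [hp.1, hp.2]
  calc cutSize g P' ≤ cutSize g P + #{p : PairIdx n | p.val.1 ∈ D ∨ p.val.2 ∈ D} := by
        rw [cutSize, cutSize, ← sum_boole, ← sum_add_distrib]
        exact sum_le_sum fun p _ => hpair p
    _ ≤ cutSize g P + hammingDist P' P * n := by
        gcongr
        exact_mod_cast card_pairIdx_touching_le D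

lemma hammingDist_decide_mem {ι : Type*} [Fintype ι] [DecidableEq ι] (A B : Finset ι) :
    hammingDist (fun i => decide (i ∈ B)) (fun i => decide (i ∈ A)) = #(B \ A) + #(A \ B) := by
  rw [← card_union_of_disjoint disjoint_sdiff_sdiff, hammingDist]
  congr 1
  ext i
  by_cases hA : i ∈ A <;> by_cases hB : i ∈ B <;> simp [hA, hB]

lemma exists_card_eq_hammingDist_eq {ι : Type*} [Fintype ι] (P : ι → Bool) {m : ℕ}
    (hm : m ≤ Fintype.card ι) :
    ∃ P' : ι → Bool, #{i | P' i} = m ∧ (hammingDist P' P : ℝ) = |(#{i | P i} : ℝ) - m| := by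
  classical
  set A : Finset ι := {i | P i}
  have hP : P = fun i => decide (i ∈ A) := by funext i; simp [A]
  obtain ⟨B, hB, hnested⟩ : ∃ B : Finset ι, #B = m ∧ (B ⊆ A ∨ A ⊆ B) := by
    rcases le_total m #A with h | h
    · obtain ⟨B, hBA, hB⟩ := exists_subset_card_eq h
      exact ⟨B, hB, .inl hBA⟩
    · obtain ⟨B, hAB, hB⟩ := exists_superset_card_eq h (by simpa using hm)
      exact ⟨B, hB, .inr hAB⟩
  refine ⟨fun i => decide (i ∈ B), by simpa using hB, ?_⟩
  rw [hP, hammingDist_decide_mem, ← hB]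
  rcases hnested with h | h
  · rw [sdiff_eq_empty_iff_subset.mpr h, card_empty, zero_add, card_sdiff_of_subset h,
      Nat.cast_sub (card_le_card h),
      abs_of_nonneg (sub_nonneg.mpr (by exact_mod_cast card_le_card h))]
  · rw [sdiff_eq_empty_iff_subset.mpr h, card_empty, add_zero, card_sdiff_of_subset h,
      Nat.cast_sub (card_le_card h),
      abs_of_nonpos (sub_nonpos.mpr (by exact_mod_cast card_le_card h)), neg_sub]

lemma exists_bisection_cutSize_le {n m : ℕ} (hm : m ≤ n) (g : PairIdx n → Bool)
    (P : Fin n → Bool) :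
    ∃ P' : Fin n → Bool, #{i | P' i} = m ∧
      cutSize g P' ≤ cutSize g P + |(#{i | P i} : ℝ) - m| * n := by
  obtain ⟨P', hcard, hdist⟩ := exists_card_eq_hammingDist_eq P (m := m) (by simpa using hm)
  exact ⟨P', hcard, hdist ▸ cutSize_le_add_hammingDist_mul g P P'⟩

lemma sqrt_mul_le_mul_of_one_le_mul_sqrt_div {x y c : ℝ} (hx : 0 ≤ x) (hy : 0 < y)
    (h : 1 ≤ c * √(x / y)) : √(x * y) ≤ c * x := by
  have hprod : √(x * y) * √(x / y) = x := by
    rw [← sqrt_mul (by positivity), show x * y * (x / y) = x ^ 2 by field_simp, sqrt_sq hx]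
  calc √(x * y) ≤ √(x * y) * (c * √(x / y)) := le_mul_of_one_le_right (sqrt_nonneg _) h
    _ = c * (√(x * y) * √(x / y)) := by ring
    _ = c * x := by rw [hprod]

open Classical in
theorem planted_bisection_upper (ε : ℕ → ℝ) (hub : ∀ n, ε n < 0.001)
    (hlb : Filter.Tendsto (fun n => ε n * Real.sqrt ((n : ℝ) / Real.log n))
      Filter.atTop Filter.atTop) :
    ∃ α : ℝ, 0 < α ∧ ∃ N : ℕ, ∀ n : ℕ, N ≤ n → Even n →
      1 - (n : ℝ) ^ (-α) ≤
        ∑ P : Fin n → Bool, ∑ g : PairIdx n → Bool,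
          plantedDensity n (100 * ε n) P g *
            (if ∃ P' : Fin n → Bool,
                (Finset.univ.filter (fun i => P' i = true)).card = n / 2 ∧
                cutSize g P' ≤ cutSize g P + 0.001 * ε n * (n : ℝ) ^ 2
             then 1 else 0) := by
  obtain ⟨N, hN⟩ := Filter.eventually_atTop.mp (hlb.eventually_ge_atTop 1000)
  refine ⟨1, one_pos, max N 2, fun n hn hEven => ?_⟩
  have hn2 : 2 ≤ n := le_of_max_le_right hn
  have hn1 : (1 : ℝ) < n := by exact_mod_cast hn2
  have hε := hN n (le_of_max_le_left hn)
  have hεpos : 0 < ε n := pos_of_mul_pos_left (by linarith) (sqrt_nonneg _)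
  have hρ : |100 * ε n| ≤ 1 / 2 := abs_le.mpr ⟨by linarith, by linarith [hub n]⟩
  have hslack : √(n * log n) ≤ 0.001 * ε n * n :=
    sqrt_mul_le_mul_of_one_le_mul_sqrt_div (by positivity) (log_pos hn1) (by linarith)
  have hhalf : ((n / 2 : ℕ) : ℝ) = n / 2 := Nat.cast_div_charZero (even_iff_two_dvd.mp hEven)
  refine le_trans ?_ (card_div_le_sum_plantedDensity hρ _
    {P | |(#{i | P i} : ℝ) - n / 2| ≤ √(n * log n)} fun P hP g => ?_)
  · calc 1 - (n : ℝ) ^ (-1 : ℝ) ≤ 1 - 2 / (n : ℝ) ^ 2 := by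
          rw [rpow_neg_one, sub_le_sub_iff_left, div_le_iff₀ (by positivity), sq, ← mul_assoc,
            inv_mul_cancel₀ (by positivity), one_mul]
          exact_mod_cast hn2
      _ ≤ _ := by
          have hcard : 1 < Fintype.card (Fin n) := by rw [Fintype.card_fin]; exact hn2
          simpa using one_sub_two_div_sq_le_card_balanced hcard
  · obtain ⟨P', hcard, hcut⟩ := exists_bisection_cutSize_le (Nat.div_le_self n 2) g P
    refine ⟨P', hcard, hcut.trans ?_⟩
    rw [hhalf]
    have hbal := (mem_filter.mp hP).2
    calc cutSize g P + |(#{i | P i} : ℝ) - n / 2| * n ≤ cutSize g P + 0.001 * ε n * n * n := by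
          gcongr; exact hbal.trans hslack
      _ = cutSize g P + 0.001 * ε n * (n : ℝ) ^ 2 := by ring
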